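/- arXiv:2309.07399 — 5 statements merged into one kernel-verified Lean document; each statement's English description precedes it below -/
import Mathlib

section
/- Let g ∈ U(N) and let X, Y be N×N complex matrices. Let {B_k} be an orthonormal basis of the (real) tangent space T_g U(N) with respect to the real inner product ⟨A,B⟩ = (1/2) Re Tr(A† B). Then the sum over k of ⟨B_k, X B_k Y⟩ equals Re(Tr(X) Tr(Y)). -/
open Matrix

/-!
With `⟨A, B⟩ = ½ Re tr(Aᴴ B)` the map `P M = ½ (M - g Mᴴ g)` is the orthogonal projection onto
`T_g U(N)`, so the sum is the trace of `P ∘ L` for the real-linear map `L M = X M Y`, independent of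
the basis. Computing that trace in the real basis `E_pq`, `I • E_pq` of all matrices, the
`g`-dependent part of `P` enters with opposite signs for `E_pq` and `I • E_pq` and cancels; what
is left is `2 ⟨E_pq, X E_pq Y⟩ = Re (X_pp Y_qq)`.
-/

namespace LinearMap.BilinForm

variable {R V ι : Type*} [CommSemiring R] [AddCommMonoid V] [Module R V] [Fintype ι]
  [DecidableEq ι]

theorem apply_eq_sum_of_mem_span (β : LinearMap.BilinForm R V) {b : ι → V}
    (hb : ∀ k l, β (b k) (b l) = if k = l then 1 else 0) {M : V}
    (hM : M ∈ Submodule.span R (Set.range b)) (W : V) :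
    β M W = ∑ k, β (b k) M * β (b k) W := by
  obtain ⟨c, rfl⟩ := (Submodule.mem_span_range_iff_exists_fun R).mp hM
  simp [map_sum, hb]

end LinearMap.BilinForm

section ReTraceForm

variable {n : Type*} [Fintype n]

noncomputable def reTraceForm : LinearMap.BilinForm ℝ (Matrix n n ℂ) :=
  LinearMap.mk₂ ℝ (fun A B => (1 / 2 : ℝ) * (trace (Aᴴ * B)).re)
    (fun A A' B => by simp [Matrix.add_mul, mul_add])
    (fun r A B => by simp [mul_left_comm])
    (fun A B B' => by simp [mul_add])
    (fun r A B => by simp [mul_left_comm])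

theorem reTraceForm_apply (A B : Matrix n n ℂ) :
    reTraceForm A B = (1 / 2 : ℝ) * (trace (Aᴴ * B)).re := rfl

theorem reTraceForm_comm (A B : Matrix n n ℂ) : reTraceForm A B = reTraceForm B A := by
  rw [reTraceForm_apply, reTraceForm_apply, show Bᴴ * A = (Aᴴ * B)ᴴ by simp,
    trace_conjTranspose]
  simp

theorem reTraceForm_mul_mul (A X M Y : Matrix n n ℂ) :
    reTraceForm A (X * M * Y) = reTraceForm (Xᴴ * A * Yᴴ) M := by
  simp only [reTraceForm_apply, conjTranspose_mul, conjTranspose_conjTranspose]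
  rw [Matrix.mul_assoc Y, trace_mul_comm Y]
  simp only [Matrix.mul_assoc]

theorem reTraceForm_I_smul (A B : Matrix n n ℂ) :
    reTraceForm (Complex.I • A) (Complex.I • B) = reTraceForm A B := by
  simp [reTraceForm_apply, smul_smul, Complex.conj_I]

variable [DecidableEq n]

theorem reTraceForm_single_left (p q : n) (Z : Matrix n n ℂ) :
    reTraceForm (single p q 1) Z = (1 / 2 : ℝ) * (Z p q).re := by
  simp [reTraceForm_apply, trace, mul_apply, single_apply, ite_and]

theorem reTraceForm_I_smul_single_left (p q : n) (Z : Matrix n n ℂ) :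
    reTraceForm (Complex.I • single p q 1) Z = (1 / 2 : ℝ) * (Z p q).im := by
  simp [reTraceForm_apply, trace, mul_apply, single_apply, ite_and, Complex.conj_I]

-- The basis `single p q 1`, `I • single p q 1` is orthogonal with all norms `1 / √2`.
theorem reTraceForm_eq_sum_single (Z W : Matrix n n ℂ) :
    reTraceForm Z W = 2 * ∑ p, ∑ q,
      (reTraceForm (single p q 1) Z * reTraceForm (single p q 1) W
        + reTraceForm (Complex.I • single p q 1) Z * reTraceForm (Complex.I • single p q 1) W) := by
  simp only [reTraceForm_single_left, reTraceForm_I_smul_single_left]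
  simp only [reTraceForm_apply, trace, diag_apply, mul_apply, conjTranspose_apply, Complex.re_sum,
    Finset.mul_sum]
  rw [Finset.sum_comm]
  refine Finset.sum_congr rfl fun p _ => Finset.sum_congr rfl fun q _ => ?_
  simp only [RCLike.star_def, Complex.mul_re, Complex.conj_re, Complex.conj_im]
  ring

end ReTraceForm

section TangentProjection

variable {n : Type*} [Fintype n] {g : Matrix n n ℂ}

/-- For unitary `g`, the orthogonal projection onto the tangent space
`{M | gᴴ * M + Mᴴ * g = 0}` of `U(n)` at `g`. -/
noncomputable def tangentProj (g M : Matrix n n ℂ) : Matrix n n ℂ :=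
  (1 / 2 : ℝ) • (M - g * Mᴴ * g)

theorem reTraceForm_mul_conjTranspose_mul (A M : Matrix n n ℂ) :
    reTraceForm (g * Aᴴ * g) M = reTraceForm (g * Mᴴ * g) A := by
  simp only [reTraceForm_apply, conjTranspose_mul, conjTranspose_conjTranspose, Matrix.mul_assoc]
  rw [← Matrix.mul_assoc, trace_mul_comm]
  simp only [Matrix.mul_assoc]

theorem reTraceForm_tangentProj_left (A M : Matrix n n ℂ) :
    reTraceForm (tangentProj g A) M = reTraceForm A (tangentProj g M) := by
  rw [tangentProj, tangentProj, LinearMap.map_smul₂, map_smul, LinearMap.map_sub₂, map_sub,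
    reTraceForm_mul_conjTranspose_mul, reTraceForm_comm A M, reTraceForm_comm A (g * Mᴴ * g)]

theorem reTraceForm_tangentProj_add_I_smul (M A : Matrix n n ℂ) :
    reTraceForm (tangentProj g M) A
      + reTraceForm (tangentProj g (Complex.I • M)) (Complex.I • A) = reTraceForm M A := by
  have hI : tangentProj g (Complex.I • M) = Complex.I • ((1 / 2 : ℝ) • (M + g * Mᴴ * g)) := by
    simp only [tangentProj, conjTranspose_smul, RCLike.star_def, Complex.conj_I, neg_smul, mul_neg,
      Matrix.mul_smul, neg_mul, smul_mul, sub_neg_eq_add, smul_add]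
    module
  rw [hI, reTraceForm_I_smul, ← LinearMap.map_add₂, tangentProj]
  congr 2
  module

variable [DecidableEq n]

theorem tangentProj_eq_self (hg : gᴴ * g = 1) {M : Matrix n n ℂ}
    (hM : gᴴ * M + Mᴴ * g = 0) : tangentProj g M = M := by
  have hM' : g * Mᴴ * g = -M := by
    rw [Matrix.mul_assoc, eq_neg_of_add_eq_zero_right hM, Matrix.mul_neg, ← Matrix.mul_assoc,
      mul_eq_one_comm.mp hg, Matrix.one_mul]
  rw [tangentProj, hM', sub_neg_eq_add]
  module

theorem tangentProj_mem_tangent (hg : gᴴ * g = 1) (M : Matrix n n ℂ) :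
    gᴴ * tangentProj g M + (tangentProj g M)ᴴ * g = 0 := by
  have hcancel : ∀ A : Matrix n n ℂ, gᴴ * (g * A) = A := fun A => by
    rw [← Matrix.mul_assoc, hg, Matrix.one_mul]
  simp [tangentProj, Matrix.mul_sub, Matrix.sub_mul, Matrix.mul_assoc, hg, hcancel, ← smul_add]

end TangentProjection

section OrthonormalTangentBasis

variable {n ι : Type*} [Fintype n] [DecidableEq n] [Fintype ι] [DecidableEq ι]
  {g : Matrix n n ℂ} {B : ι → Matrix n n ℂ}

theorem sum_reTraceForm_mul_reTraceForm (hg : gᴴ * g = 1)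
    (htang : ∀ k, gᴴ * B k + (B k)ᴴ * g = 0)
    (horth : ∀ k l, reTraceForm (B k) (B l) = if k = l then 1 else 0)
    (hspan : ∀ M : Matrix n n ℂ, gᴴ * M + Mᴴ * g = 0 → M ∈ Submodule.span ℝ (Set.range B))
    (Z W : Matrix n n ℂ) :
    ∑ k, reTraceForm Z (B k) * reTraceForm W (B k) = reTraceForm (tangentProj g Z) W := by
  have hproj : ∀ V k, reTraceForm V (B k) = reTraceForm (B k) (tangentProj g V) := fun V k => by
    rw [← reTraceForm_tangentProj_left, tangentProj_eq_self hg (htang k), reTraceForm_comm]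
  simp only [hproj]
  rw [← reTraceForm.apply_eq_sum_of_mem_span horth (hspan _ (tangentProj_mem_tangent hg Z)),
    ← reTraceForm_tangentProj_left, tangentProj_eq_self hg (tangentProj_mem_tangent hg Z)]

theorem sum_reTraceForm_mul_mul (hg : gᴴ * g = 1)
    (htang : ∀ k, gᴴ * B k + (B k)ᴴ * g = 0)
    (horth : ∀ k l, reTraceForm (B k) (B l) = if k = l then 1 else 0)
    (hspan : ∀ M : Matrix n n ℂ, gᴴ * M + Mᴴ * g = 0 → M ∈ Submodule.span ℝ (Set.range B))
    (X Y : Matrix n n ℂ) :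
    ∑ k, reTraceForm (B k) (X * B k * Y)
      = 2 * ∑ p, ∑ q, reTraceForm (single p q 1) (Xᴴ * single p q 1 * Yᴴ) := by
  have hparseval := sum_reTraceForm_mul_reTraceForm hg htang horth hspan
  calc ∑ k, reTraceForm (B k) (X * B k * Y)
      = ∑ k, 2 * ∑ p, ∑ q,
          (reTraceForm (single p q 1) (B k) * reTraceForm (Xᴴ * single p q 1 * Yᴴ) (B k)
            + reTraceForm (Complex.I • single p q 1) (B k)
              * reTraceForm (Complex.I • (Xᴴ * single p q 1 * Yᴴ)) (B k)) := by
        refine Finset.sum_congr rfl fun k _ => ?_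
        rw [reTraceForm_eq_sum_single]
        simp only [reTraceForm_mul_mul, Matrix.mul_smul, Matrix.smul_mul]
    _ = 2 * ∑ p, ∑ q,
          (reTraceForm (tangentProj g (single p q 1)) (Xᴴ * single p q 1 * Yᴴ)
            + reTraceForm (tangentProj g (Complex.I • single p q 1))
              (Complex.I • (Xᴴ * single p q 1 * Yᴴ))) := by
        rw [← Finset.mul_sum, Finset.sum_comm]
        refine congrArg (2 * ·) (Finset.sum_congr rfl fun p _ => ?_)
        rw [Finset.sum_comm]
        simp only [Finset.sum_add_distrib, hparseval]
    _ = 2 * ∑ p, ∑ q, reTraceForm (single p q 1) (Xᴴ * single p q 1 * Yᴴ) := by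
        simp only [reTraceForm_tangentProj_add_I_smul]

end OrthonormalTangentBasis

theorem two_mul_sum_reTraceForm_single {n : Type*} [Fintype n] [DecidableEq n]
    (X Y : Matrix n n ℂ) :
    2 * ∑ p, ∑ q, reTraceForm (single p q 1) (Xᴴ * single p q 1 * Yᴴ)
      = (trace X * trace Y).re := by
  have hentry : ∀ p q, (Xᴴ * single p q (1 : ℂ) * Yᴴ) p q = star (X p p) * star (Y q q) :=
    fun p q => by simp [mul_apply, single_apply, ite_and]
  calc 2 * ∑ p, ∑ q, reTraceForm (single p q 1) (Xᴴ * single p q 1 * Yᴴ)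
      = ∑ p, ∑ q, (X p p * Y q q).re := by
        simp [reTraceForm_single_left, hentry, Finset.mul_sum, Complex.mul_re]
    _ = (trace X * trace Y).re := by simp [trace, Finset.sum_mul_sum, Complex.re_sum]

/-- For g ∈ U(N) and any orthonormal basis {B_k} of the real tangent space T_g U(N)
w.r.t. ⟨A,B⟩ = (1/2) Re Tr(Aᴴ B), we have ∑_k ⟨B_k, X B_k Y⟩ = Re(Tr X · Tr Y). -/
theorem stmt_4 {N : ℕ} (g : Matrix (Fin N) (Fin N) ℂ)
    (hg : gᴴ * g = 1)
    {ι : Type*} [Fintype ι] [DecidableEq ι] (B : ι → Matrix (Fin N) (Fin N) ℂ)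
    (htang : ∀ k, gᴴ * B k + (B k)ᴴ * g = 0)
    (horth : ∀ k l, (1/2 : ℝ) * (Matrix.trace ((B k)ᴴ * B l)).re
      = if k = l then 1 else 0)
    (hspan : ∀ M : Matrix (Fin N) (Fin N) ℂ, gᴴ * M + Mᴴ * g = 0 →
      M ∈ Submodule.span ℝ (Set.range B))
    (X Y : Matrix (Fin N) (Fin N) ℂ) :
    ∑ k, (1/2 : ℝ) * (Matrix.trace ((B k)ᴴ * (X * B k * Y))).re
      = (Matrix.trace X * Matrix.trace Y).re :=
  (sum_reTraceForm_mul_mul hg htang horth hspan X Y).trans (two_mul_sum_reTraceForm_single X Y)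
end

section
/- Let g ∈ SU(N) and let X, Y be N×N complex matrices. Let {B_k} be an orthonormal basis of T_g SU(N) with respect to ⟨A,B⟩ = (1/2) Re Tr(A† B). Then the sum over k of ⟨B_k, X B_k Y⟩ equals Re(Tr(X) Tr(Y)) - (1/N) Re Tr(g^{-1} X g Y). -/
/-!
The sum `∑ₖ ⟨Bₖ, X Bₖ Y⟩` depends on the basis only through the orthogonal projection `P` onto
`T_g SU(N)`, which is explicit. Since `Tr(B† A) = 2 ⟨B, A⟩ + 2i ⟨B, -iA⟩`, the complex Gram map `A ↦ ∑ₖ Tr(Bₖ† A) Bₖ` equals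
`2 P A + 2i P(-iA) = 2A - (2/N) Tr(g† A) g`: the antilinear part `g A† g` of `P` cancels.
Pairing this identity with `X · Y` in matrix coordinates gives
`∑ₖ Tr(Bₖ† X Bₖ Y) = 2 Tr X Tr Y - (2/N) Tr(g† X g Y)`, whose real part is the claim.
-/

open Matrix Complex

namespace SUTrace

variable {n : Type*} [Fintype n] [DecidableEq n]

noncomputable def reInner (A : Matrix n n ℂ) : Matrix n n ℂ →ₗ[ℝ] ℝ where
  toFun M := (1/2 : ℝ) * (trace (Aᴴ * M)).re
  map_add' M M' := by simp [mul_add]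
  map_smul' r M := by simp; ring

def IsTangent (g M : Matrix n n ℂ) : Prop :=
  gᴴ * M + Mᴴ * g = 0 ∧ trace (gᴴ * M) = 0

structure IsOrthonormalTangentBasis {ι : Type*} [Fintype ι] [DecidableEq ι]
    (g : Matrix n n ℂ) (B : ι → Matrix n n ℂ) : Prop where
  isTangent : ∀ k, IsTangent g (B k)
  orthonormal : ∀ k l, reInner (B k) (B l) = if k = l then 1 else 0
  mem_span : ∀ M, IsTangent g M → M ∈ Submodule.span ℝ (Set.range B)

/-- The orthogonal projection onto `T_g SU(N)`: `½ (w - g w† g)` projects onto `g · u(N)`, and the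
last term removes the component along the unit vector `√(2/N) i g`. -/
noncomputable def tangentProj (g w : Matrix n n ℂ) : Matrix n n ℂ :=
  (1/2 : ℝ) • (w - g * wᴴ * g) - (I * (trace (gᴴ * w)).im / Fintype.card n) • g

theorem sum_reInner_smul_of_mem_span {ι : Type*} [Fintype ι] [DecidableEq ι]
    {B : ι → Matrix n n ℂ} (horth : ∀ k l, reInner (B k) (B l) = if k = l then 1 else 0)
    {w : Matrix n n ℂ} (hw : w ∈ Submodule.span ℝ (Set.range B)) :
    ∑ k, reInner (B k) w • B k = w := by
  obtain ⟨c, rfl⟩ := (Submodule.mem_span_range_iff_exists_fun ℝ).1 hw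
  simp [horth]

theorem trace_conjTranspose_mul_eq_reInner (B A : Matrix n n ℂ) :
    trace (Bᴴ * A) = 2 * reInner B A + 2 * I * reInner B ((-I) • A) := by
  simp [reInner, Complex.ext_iff]

theorem trace_conjTranspose_mul_single (B : Matrix n n ℂ) (p q : n) :
    trace (Bᴴ * single p q 1) = star (B p q) := by
  simp [trace_mul_single]

omit [DecidableEq n] in
theorem trace_conjTranspose_mul_eq_sum (B M : Matrix n n ℂ) :
    trace (Bᴴ * M) = ∑ p, ∑ q, star (B p q) * M p q := by
  simp only [trace, diag_apply, mul_apply, conjTranspose_apply]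
  exact Finset.sum_comm

theorem sum_trace_conjTranspose_mul_mul_mul_eq_sum {ι : Type*} [Fintype ι] (B : ι → Matrix n n ℂ)
    (X Y : Matrix n n ℂ) :
    ∑ k, trace ((B k)ᴴ * (X * B k * Y))
      = ∑ p, ∑ q, (X * (∑ k, trace ((B k)ᴴ * single p q 1) • B k) * Y) p q := by
  simp only [trace_conjTranspose_mul_single]
  simp only [Matrix.mul_sum, Matrix.sum_mul, Matrix.mul_smul, Matrix.smul_mul, Matrix.sum_apply,
    Matrix.smul_apply, smul_eq_mul, trace_conjTranspose_mul_eq_sum (B _)]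
  rw [Finset.sum_comm]
  exact Finset.sum_congr rfl fun p _ => Finset.sum_comm

variable {g : Matrix n n ℂ}

theorem reInner_mul_conjTranspose_mul (hg : g * gᴴ = 1) {B : Matrix n n ℂ}
    (hB : gᴴ * B + Bᴴ * g = 0) (w : Matrix n n ℂ) :
    reInner B (g * wᴴ * g) = -reInner B w := by
  have hBg : Bᴴ * g = -(gᴴ * B) := eq_neg_of_add_eq_zero_right hB
  have : trace (Bᴴ * (g * wᴴ * g)) = -star (trace (Bᴴ * w)) := calc
    trace (Bᴴ * (g * wᴴ * g)) = trace (g * (Bᴴ * g) * wᴴ) := by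
      rw [show Bᴴ * (g * wᴴ * g) = Bᴴ * g * wᴴ * g by noncomm_ring, trace_mul_comm]
      simp only [Matrix.mul_assoc]
    _ = -trace (B * wᴴ) := by
      rw [hBg, Matrix.mul_neg, ← Matrix.mul_assoc, hg, Matrix.one_mul, Matrix.neg_mul, trace_neg]
    _ = -star (trace (Bᴴ * w)) := by
      rw [trace_mul_comm, ← trace_conjTranspose, conjTranspose_mul, conjTranspose_conjTranspose]
  simp [reInner, this]

theorem reInner_smul_eq_zero {B : Matrix n n ℂ} (hB : trace (gᴴ * B) = 0) (c : ℂ) :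
    reInner B (c • g) = 0 := by
  have : trace (Bᴴ * g) = 0 := by
    rw [← star_eq_zero, ← trace_conjTranspose, conjTranspose_mul, conjTranspose_conjTranspose, hB]
  simp [reInner, this]

theorem isTangent_tangentProj (hg : gᴴ * g = 1) (w : Matrix n n ℂ) :
    IsTangent g (tangentProj g w) := by
  unfold tangentProj
  set c : ℂ := I * (trace (gᴴ * w)).im / Fintype.card n
  have hc : star c = -c := by simp [c, neg_div]
  have hgwg : gᴴ * (g * wᴴ * g) = wᴴ * g := by
    rw [Matrix.mul_assoc, ← Matrix.mul_assoc, hg, Matrix.one_mul]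
  have hwgg : gᴴ * (w * gᴴ) * g = gᴴ * w := by
    rw [Matrix.mul_assoc, Matrix.mul_assoc, hg, Matrix.mul_one]
  constructor
  · simp only [conjTranspose_sub, conjTranspose_smul, conjTranspose_mul,
      conjTranspose_conjTranspose, Matrix.mul_sub, Matrix.sub_mul, Matrix.mul_smul,
      Matrix.smul_mul, hc, hg, hgwg, hwgg, star_div₀, star_one, star_ofNat]
    module
  · rcases isEmpty_or_nonempty n with hn | hn
    · simp [trace]
    have hN : (Fintype.card n : ℂ) ≠ 0 := by exact_mod_cast Fintype.card_ne_zero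
    have hstar : trace (wᴴ * g) = star (trace (gᴴ * w)) := by
      rw [← trace_conjTranspose, conjTranspose_mul, conjTranspose_conjTranspose]
    simp only [Matrix.mul_sub, trace_sub, Matrix.mul_smul, trace_smul, hgwg, hg, trace_one,
      hstar, c]
    rw [smul_eq_mul, div_mul_cancel₀ _ hN]
    exact Complex.ext (by simp) (by simp; ring)

theorem reInner_tangentProj (hg : g * gᴴ = 1) {B : Matrix n n ℂ} (hB : IsTangent g B)
    (w : Matrix n n ℂ) : reInner B (tangentProj g w) = reInner B w := by
  simp only [tangentProj, map_sub, map_smul, reInner_smul_eq_zero hB.2,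
    reInner_mul_conjTranspose_mul hg hB.1 w, smul_eq_mul]
  ring

variable {ι : Type*} [Fintype ι] [DecidableEq ι] {B : ι → Matrix n n ℂ}

theorem IsOrthonormalTangentBasis.sum_reInner_smul (hg : gᴴ * g = 1)
    (hB : IsOrthonormalTangentBasis g B) (w : Matrix n n ℂ) :
    ∑ k, reInner (B k) w • B k = tangentProj g w := by
  have hg' : g * gᴴ = 1 := mul_eq_one_comm.mp hg
  rw [← sum_reInner_smul_of_mem_span hB.orthonormal (hB.mem_span _ (isTangent_tangentProj hg w))]
  simp only [reInner_tangentProj hg' (hB.isTangent _)]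

theorem IsOrthonormalTangentBasis.sum_trace_conjTranspose_mul_smul (hg : gᴴ * g = 1)
    (hB : IsOrthonormalTangentBasis g B) (A : Matrix n n ℂ) :
    ∑ k, trace ((B k)ᴴ * A) • B k = (2 : ℂ) • A - (2 / Fintype.card n * trace (gᴴ * A)) • g := by
  calc ∑ k, trace ((B k)ᴴ * A) • B k
      = (2 : ℂ) • ∑ k, reInner (B k) A • B k
        + (2 * I) • ∑ k, reInner (B k) ((-I) • A) • B k := by
        simp only [trace_conjTranspose_mul_eq_reInner, add_smul, mul_smul, Finset.sum_add_distrib,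
          Finset.smul_sum, Complex.coe_smul]
    _ = (2 : ℂ) • tangentProj g A + (2 * I) • tangentProj g ((-I) • A) := by
        rw [hB.sum_reInner_smul hg, hB.sum_reInner_smul hg]
    _ = _ := by
      simp only [tangentProj, conjTranspose_smul, Matrix.mul_smul, Matrix.smul_mul, trace_smul,
        smul_eq_mul, star_neg, Complex.star_def, conj_I, neg_neg]
      set t := trace (gᴴ * A)
      have him : (-I * t).im = -t.re := by simp
      rw [him]
      conv_rhs => rw [← Complex.re_add_im t]
      match_scalars
      · linear_combination (-1 : ℂ) * I_sq
      · linear_combination (-1 : ℂ) * I_sq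
      · linear_combination (2 * t.re / Fintype.card n : ℂ) * I_sq

theorem IsOrthonormalTangentBasis.sum_trace_conjTranspose_mul_mul_mul (hg : gᴴ * g = 1)
    (hB : IsOrthonormalTangentBasis g B) (X Y : Matrix n n ℂ) :
    ∑ k, trace ((B k)ᴴ * (X * B k * Y))
      = 2 * (trace X * trace Y) - 2 / Fintype.card n * trace (gᴴ * X * g * Y) := by
  have hsingle : ∀ p q, (X * single p q (1 : ℂ) * Y) p q = X p p * Y q q := by
    simp [mul_apply, single, ite_and]
  rw [sum_trace_conjTranspose_mul_mul_mul_eq_sum]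
  simp only [hB.sum_trace_conjTranspose_mul_smul hg]
  simp only [trace_conjTranspose_mul_single, Matrix.mul_sub, Matrix.sub_mul, Matrix.mul_smul,
    Matrix.smul_mul, Matrix.sub_apply, Matrix.smul_apply, smul_eq_mul, Finset.sum_sub_distrib,
    hsingle]
  rw [Matrix.mul_assoc gᴴ, Matrix.mul_assoc gᴴ, trace_conjTranspose_mul_eq_sum, trace, trace,
    Finset.sum_mul_sum]
  simp only [Finset.mul_sum, diag_apply, mul_assoc]

end SUTrace

open SUTrace

theorem stmt_5_general {N : ℕ} (g : Matrix (Fin N) (Fin N) ℂ)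
    (hg : gᴴ * g = 1)
    {ι : Type*} [Fintype ι] [DecidableEq ι] (B : ι → Matrix (Fin N) (Fin N) ℂ)
    (htang : ∀ k, gᴴ * B k + (B k)ᴴ * g = 0 ∧ Matrix.trace (g⁻¹ * B k) = 0)
    (horth : ∀ k l, (1/2 : ℝ) * (Matrix.trace ((B k)ᴴ * B l)).re
      = if k = l then 1 else 0)
    (hspan : ∀ M : Matrix (Fin N) (Fin N) ℂ,
      gᴴ * M + Mᴴ * g = 0 → Matrix.trace (g⁻¹ * M) = 0 →
      M ∈ Submodule.span ℝ (Set.range B))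
    (X Y : Matrix (Fin N) (Fin N) ℂ) :
    ∑ k, (1/2 : ℝ) * (Matrix.trace ((B k)ᴴ * (X * B k * Y))).re
      = (Matrix.trace X * Matrix.trace Y).re
        - (1 / (N : ℝ)) * (Matrix.trace (g⁻¹ * X * g * Y)).re := by
  rw [inv_eq_left_inv hg] at htang hspan ⊢
  have hB : IsOrthonormalTangentBasis g B :=
    ⟨htang, horth, fun M hM => hspan M hM.1 hM.2⟩
  rw [← Finset.mul_sum, ← Complex.re_sum, hB.sum_trace_conjTranspose_mul_mul_mul hg,
    Fintype.card_fin]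
  simp [Complex.mul_re]
  ring

/-- For g ∈ SU(N) and any orthonormal basis {B_k} of T_g SU(N) w.r.t.
⟨A,B⟩ = (1/2) Re Tr(Aᴴ B), ∑_k ⟨B_k, X B_k Y⟩
= Re(Tr X Tr Y) - (1/N) Re Tr(g⁻¹ X g Y). -/
theorem stmt_5 {N : ℕ} (g : Matrix (Fin N) (Fin N) ℂ)
    (hg : gᴴ * g = 1) (hdet : g.det = 1)
    {ι : Type*} [Fintype ι] [DecidableEq ι] (B : ι → Matrix (Fin N) (Fin N) ℂ)
    (htang : ∀ k, gᴴ * B k + (B k)ᴴ * g = 0 ∧ Matrix.trace (g⁻¹ * B k) = 0)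
    (horth : ∀ k l, (1/2 : ℝ) * (Matrix.trace ((B k)ᴴ * B l)).re
      = if k = l then 1 else 0)
    (hspan : ∀ M : Matrix (Fin N) (Fin N) ℂ,
      gᴴ * M + Mᴴ * g = 0 → Matrix.trace (g⁻¹ * M) = 0 →
      M ∈ Submodule.span ℝ (Set.range B))
    (X Y : Matrix (Fin N) (Fin N) ℂ) :
    ∑ k, (1/2 : ℝ) * (Matrix.trace ((B k)ᴴ * (X * B k * Y))).re
      = (Matrix.trace X * Matrix.trace Y).re
        - (1 / (N : ℝ)) * (Matrix.trace (g⁻¹ * X * g * Y)).re :=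
  stmt_5_general g hg B htang horth hspan X Y
end

section
/- Let g be an N×N complex unitary matrix and P, Q arbitrary N×N complex matrices. Using the real inner product ⟨A,B⟩ = (1/2) Re Tr(A† B), the sum of ⟨B_k, P B_k Q⟩ over the orthonormal family B_{ij}^- = g(e_i e_j^T - e_j e_i^T) (i<j), B_{ij}^+ = i g(e_i e_j^T + e_j e_i^T) (i<j), and B_i = √2 · i g e_i e_i^T (1 ≤ i ≤ N), equals Re(Tr(P) Tr(Q)). -/
/-!
With `M = gᴴ P g`, matrix units satisfy `Tr ((g E_ab)ᴴ P (g E_cd) Q) = M_ac Q_db`. For `i < j` the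
cross terms `M_ij Q_ij` and `M_ji Q_ji` of the antisymmetric element and of `i` times the symmetric
one cancel, so the whole sum collapses to `Re ∑_{i,j} M_ii Q_jj = Re (Tr M · Tr Q)`, and
`Tr M = Tr P` because `g` is unitary.
-/

open Matrix

section
variable {n R : Type*} [Fintype n] [DecidableEq n] [CommRing R] [StarRing R]

lemma trace_conjTranspose_mul_single_mul (g P Q : Matrix n n R) (a b c d : n) :
    trace ((g * single a b 1)ᴴ * (P * (g * single c d 1) * Q)) = (gᴴ * P * g) a c * Q d b := by
  rw [conjTranspose_mul, conjTranspose_single, star_one,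
    show single b a 1 * gᴴ * (P * (g * single c d 1) * Q)
      = single b a 1 * (gᴴ * P * g) * single c d 1 * Q by simp only [Matrix.mul_assoc],
    single_mul_mul_single, trace_single_mul, smul_eq_mul, one_mul, mul_one]

lemma trace_conjTranspose_smul_mul (c : R) (X P Q : Matrix n n R) :
    trace ((c • X)ᴴ * (P * (c • X) * Q)) = (star c * c) * trace (Xᴴ * (P * X * Q)) := by
  rw [conjTranspose_smul, smul_mul_assoc, mul_smul_comm, smul_mul_assoc, mul_smul_comm,
    trace_smul, trace_smul, smul_smul, smul_eq_mul]
end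

lemma Finset.sum_sum_eq_sum_lt_add_sum_diag {ι M : Type*} [Fintype ι] [LinearOrder ι]
    [AddCommMonoid M] (f : ι → ι → M) :
    ∑ i, ∑ j, f i j
      = ∑ p ∈ univ.filter (fun p : ι × ι => p.1 < p.2), (f p.1 p.2 + f p.2 p.1) + ∑ i, f i i := by
  have hswap : ∑ p ∈ univ.filter (fun p : ι × ι => p.1 < p.2), f p.2 p.1
      = ∑ p ∈ univ.filter (fun p : ι × ι => p.2 < p.1), f p.1 p.2 :=
    sum_equiv (Equiv.prodComm ι ι) (by simp) (by simp)
  have hdiag : ∑ i, f i i = ∑ p ∈ univ.filter (fun p : ι × ι => p.1 = p.2), f p.1 p.2 := by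
    rw [sum_filter, Fintype.sum_prod_type]
    simp
  have htrich : ∀ p : ι × ι, f p.1 p.2 = (if p.1 < p.2 then f p.1 p.2 else 0)
      + (if p.2 < p.1 then f p.1 p.2 else 0) + (if p.1 = p.2 then f p.1 p.2 else 0) := by
    intro p
    rcases lt_trichotomy p.1 p.2 with h | h | h
    · simp [h, h.ne, h.not_gt]
    · simp [h]
    · simp [h, h.ne', h.not_gt]
  rw [sum_add_distrib, hswap, hdiag, ← Fintype.sum_prod_type', sum_filter, sum_filter, sum_filter,
    ← sum_add_distrib, ← sum_add_distrib]
  exact sum_congr rfl fun p _ => htrich p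

section
variable {n : Type*} [Fintype n] [DecidableEq n] (g P Q : Matrix n n ℂ)

lemma trace_antisymm_add_trace_I_smul_symm (i j : n) :
    trace ((g * (single i j (1:ℂ) - single j i 1))ᴴ
          * (P * (g * (single i j (1:ℂ) - single j i 1)) * Q))
      + trace ((Complex.I • (g * (single i j (1:ℂ) + single j i 1)))ᴴ
          * (P * (Complex.I • (g * (single i j (1:ℂ) + single j i 1))) * Q))
      = 2 * ((gᴴ * P * g) i i * Q j j + (gᴴ * P * g) j j * Q i i) := by
  rw [trace_conjTranspose_smul_mul, Complex.star_def, Complex.conj_I, neg_mul, Complex.I_mul_I,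
    neg_neg, one_mul]
  simp only [mul_sub, mul_add, conjTranspose_sub, conjTranspose_add, sub_mul, add_mul, trace_sub,
    trace_add, trace_conjTranspose_mul_single_mul]
  ring

lemma trace_sqrt_two_I_smul_single_diag (i : n) :
    trace ((((Real.sqrt 2 : ℂ) * Complex.I) • (g * single i i (1:ℂ)))ᴴ
        * (P * (((Real.sqrt 2 : ℂ) * Complex.I) • (g * single i i (1:ℂ))) * Q))
      = 2 * ((gᴴ * P * g) i i * Q i i) := by
  rw [trace_conjTranspose_smul_mul, trace_conjTranspose_mul_single_mul, Complex.star_def, map_mul,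
    Complex.conj_ofReal, Complex.conj_I]
  have h : ((Real.sqrt 2 : ℝ) : ℂ) ^ 2 = 2 := by exact_mod_cast Real.sq_sqrt zero_le_two
  linear_combination (gᴴ * P * g) i i * Q i i * h
    - ((Real.sqrt 2 : ℝ) : ℂ) ^ 2 * ((gᴴ * P * g) i i * Q i i) * Complex.I_sq
end

/-- For unitary g and complex matrices P, Q, summing ⟨B, P B Q⟩ (with
⟨A,B⟩ = (1/2)Re Tr(AᴴB)) over the orthonormal basis g(e_ie_jᵀ - e_je_iᵀ) (i<j),
i·g(e_ie_jᵀ + e_je_iᵀ) (i<j), √2·i·g e_ie_iᵀ gives Re(Tr P · Tr Q). -/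
theorem stmt_12 {N : ℕ} (g : Matrix (Fin N) (Fin N) ℂ) (hg : gᴴ * g = 1)
    (P Q : Matrix (Fin N) (Fin N) ℂ) :
    (∑ p ∈ Finset.univ.filter (fun p : Fin N × Fin N => p.1 < p.2),
        (1/2 : ℝ) * (Matrix.trace
          ((g * (Matrix.single p.1 p.2 (1:ℂ) - Matrix.single p.2 p.1 1))ᴴ
            * (P * (g * (Matrix.single p.1 p.2 (1:ℂ) - Matrix.single p.2 p.1 1)) * Q))).re)
    + (∑ p ∈ Finset.univ.filter (fun p : Fin N × Fin N => p.1 < p.2),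
        (1/2 : ℝ) * (Matrix.trace
          ((Complex.I • (g * (Matrix.single p.1 p.2 (1:ℂ) + Matrix.single p.2 p.1 1)))ᴴ
            * (P * (Complex.I • (g * (Matrix.single p.1 p.2 (1:ℂ)
                + Matrix.single p.2 p.1 1))) * Q))).re)
    + (∑ i : Fin N,
        (1/2 : ℝ) * (Matrix.trace
          ((((Real.sqrt 2 : ℂ) * Complex.I) • (g * Matrix.single i i (1:ℂ)))ᴴ
            * (P * (((Real.sqrt 2 : ℂ) * Complex.I) • (g * Matrix.single i i (1:ℂ))) * Q))).re)
      = (Matrix.trace P * Matrix.trace Q).re := by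
  have htrace : trace (gᴴ * P * g) = trace P := by
    rw [trace_mul_cycle, mul_eq_one_comm.mp hg, one_mul]
  have half_re : ∀ z : ℂ, (1 / 2 : ℝ) * (2 * z).re = z.re := fun z => by simp
  rw [← Finset.sum_add_distrib]
  simp only [← mul_add, ← Complex.add_re, trace_antisymm_add_trace_I_smul_symm,
    trace_sqrt_two_I_smul_single_diag, half_re]
  rw [← htrace, trace, trace, Finset.sum_mul_sum, Finset.sum_sum_eq_sum_lt_add_sum_diag,
    Complex.add_re, Complex.re_sum, Complex.re_sum]
  simp only [diag_apply]
end

section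
/- Let f : M_N(ℝ) → ℝ be a C² function and define the vector fields X_{ij} f (q) = Σ_a (q_{ai} ∂f/∂q_{aj} - q_{aj} ∂f/∂q_{ai}) for i < j. Then for q ∈ SO(N), Σ_{i<j} X_{ij}(X_{ij} f)(q) = -(N-1) Σ_{a,j} q_{aj} ∂f/∂q_{aj} + Σ_{a,j} ∂²f/∂q_{aj}² - Σ_{a,b,i,j} q_{bj} q_{ai} ∂²f/∂q_{bi}∂q_{aj}. -/
/-!
Write `A_{ij} = e_i e_jᵀ - e_j e_iᵀ`. Then `X_{ij}` is differentiation along the linear field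
`L_{ij} q = q A_{ij}`, so by the product rule
`X_{ij}² f (q) = D²f(q)(q A_{ij}, q A_{ij}) + Df(q)(q A_{ij}²)`.
This is symmetric in `(i, j)` and vanishes for `i = j`, so the sum over `i < j` is half the sum
over all `(i, j)`. The first-order part comes from `∑_{i,j} A_{ij}² = -2(N-1) I`. For the
second-order part, `∑_{i,j} (q A_{ij})_{ak} (q A_{ij})_{bl} = 2 δ_{kl} (q qᵀ)_{ab} - 2 q_{al} q_{bk}`,
and `q qᵀ = I` because `qᵀ q = I`.
-/

/-- The vector field X_{ij} f(q) = ∑_a (q_{ai} ∂f/∂q_{aj} - q_{aj} ∂f/∂q_{ai}) on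
M_N(ℝ) ≅ ℝ^{N×N} (Euclidean coordinates q(a,i)). -/
noncomputable def Xop {N : ℕ} (i j : Fin N)
    (f : EuclideanSpace ℝ (Fin N × Fin N) → ℝ)
    (q : EuclideanSpace ℝ (Fin N × Fin N)) : ℝ :=
  ∑ a : Fin N,
    (q (a, i) * fderiv ℝ f q (EuclideanSpace.single (a, j) 1)
      - q (a, j) * fderiv ℝ f q (EuclideanSpace.single (a, i) 1))

open Finset
open scoped Matrix

section Calculus

variable {𝕜 E F : Type*} [NontriviallyNormedField 𝕜] [NormedAddCommGroup E] [NormedSpace 𝕜 E]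
  [NormedAddCommGroup F] [NormedSpace 𝕜 F]

theorem fderiv_fderiv_apply_clm {f : E → F} {x : E} (hf : DifferentiableAt 𝕜 (fderiv 𝕜 f) x)
    (L : E →L[𝕜] E) (v : E) :
    fderiv 𝕜 (fun y => fderiv 𝕜 f y (L y)) x v
      = fderiv 𝕜 (fderiv 𝕜 f) x v (L x) + fderiv 𝕜 f x (L v) := by
  rw [fderiv_clm_apply hf L.differentiableAt, L.fderiv]
  simp [add_comm]

theorem fderiv_fderiv_apply_const {f : E → F} {x : E} (hf : DifferentiableAt 𝕜 (fderiv 𝕜 f) x)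
    (w v : E) :
    fderiv 𝕜 (fun y => fderiv 𝕜 f y w) x v = fderiv 𝕜 (fderiv 𝕜 f) x v w := by
  rw [fderiv_clm_apply hf (differentiableAt_const w)]
  simp

end Calculus

theorem Finset.sum_filter_lt_add_sum_filter_lt {ι M : Type*} [Fintype ι] [LinearOrder ι]
    [AddCommMonoid M] {g : ι → ι → M} (hsymm : ∀ i j, g i j = g j i) (hdiag : ∀ i, g i i = 0) :
    ∑ p ∈ univ.filter (fun p : ι × ι => p.1 < p.2), g p.1 p.2
      + ∑ p ∈ univ.filter (fun p : ι × ι => p.1 < p.2), g p.1 p.2 = ∑ i, ∑ j, g i j := by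
  have hsplit : ∀ p : ι × ι, g p.1 p.2
      = (if p.1 < p.2 then g p.1 p.2 else 0) + (if p.2 < p.1 then g p.2 p.1 else 0) := by
    rintro ⟨i, j⟩
    rcases lt_trichotomy i j with h | rfl | h
    · simp [h, h.not_gt]
    · simp [hdiag]
    · simp [h, h.not_gt, hsymm i j]
  have hswap : ∑ p : ι × ι, (if p.2 < p.1 then g p.2 p.1 else 0)
      = ∑ p : ι × ι, (if p.1 < p.2 then g p.1 p.2 else 0) :=
    Fintype.sum_equiv (Equiv.prodComm ι ι) _ _ fun _ => rfl
  rw [← Fintype.sum_prod_type', Fintype.sum_congr _ _ hsplit, sum_add_distrib, hswap,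
    sum_filter]

theorem Matrix.orthonormal_rows_of_orthonormal_cols {n R : Type*} [Fintype n] [DecidableEq n] [CommRing R]
    {M : Matrix n n R} (h : ∀ i j, ∑ a, M a i * M a j = if i = j then 1 else 0) (a b : n) :
    ∑ i, M a i * M b i = if a = b then 1 else 0 := by
  have hM : Mᵀ * M = 1 := by
    ext i j
    simp [Matrix.mul_apply, h, Matrix.one_apply]
  have hM' : M * Mᵀ = 1 := mul_eq_one_comm.mp hM
  simpa [Matrix.mul_apply, Matrix.one_apply] using congrFun (congrFun hM' a) b

local notation "𝕄" N:max => EuclideanSpace ℝ (Fin N × Fin N)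

variable {N : ℕ}

/-- `rotField i j q = q A_{ij}`. -/
noncomputable def rotField (i j : Fin N) : 𝕄 N →L[ℝ] 𝕄 N :=
  ∑ a, ((EuclideanSpace.proj (a, i)).smulRight (EuclideanSpace.single (a, j) 1)
    - (EuclideanSpace.proj (a, j)).smulRight (EuclideanSpace.single (a, i) 1))

theorem rotField_apply (i j : Fin N) (v : 𝕄 N) :
    rotField i j v = ∑ a, (v (a, i) • EuclideanSpace.single (a, j) 1
      - v (a, j) • EuclideanSpace.single (a, i) 1) := by
  simp [rotField]

theorem rotField_apply_apply (i j : Fin N) (v : 𝕄 N) (b k : Fin N) :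
    rotField i j v (b, k) = (if k = j then v (b, i) else 0) - (if k = i then v (b, j) else 0) := by
  simp [rotField_apply, sum_sub_distrib, Pi.single_apply, Prod.ext_iff, ite_and, eq_comm]

theorem rotField_swap (i j : Fin N) : rotField j i = -rotField i j := by
  simp only [rotField, ← sum_neg_distrib, neg_sub]

theorem rotField_self (i : Fin N) : rotField i i = 0 := by
  simp [rotField]

theorem Xop_eq_fderiv_rotField (i j : Fin N) (g : 𝕄 N → ℝ) :
    Xop i j g = fun q => fderiv ℝ g q (rotField i j q) := by
  ext q
  simp [Xop, rotField_apply]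

theorem Xop_Xop {f : 𝕄 N → ℝ} {q : 𝕄 N} (hf : DifferentiableAt ℝ (fderiv ℝ f) q) (i j : Fin N) :
    Xop i j (Xop i j f) q
      = fderiv ℝ (fderiv ℝ f) q (rotField i j q) (rotField i j q)
        + fderiv ℝ f q (rotField i j (rotField i j q)) := by
  rw [Xop_eq_fderiv_rotField i j (Xop i j f), Xop_eq_fderiv_rotField]
  exact fderiv_fderiv_apply_clm hf _ _

theorem sum_rotField_rotField (v : 𝕄 N) :
    ∑ i, ∑ j, rotField i j (rotField i j v) = (-(2 * ((N : ℝ) - 1))) • v := by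
  ext ⟨b, k⟩
  simp [rotField_apply_apply]
  ring

theorem EuclideanSpace.clm_apply_eq_sum {ι : Type*} [Fintype ι] [DecidableEq ι]
    (ℓ : EuclideanSpace ℝ ι →L[ℝ] ℝ) (v : EuclideanSpace ℝ ι) :
    ℓ v = ∑ p, v p * ℓ (EuclideanSpace.single p 1) := by
  conv_lhs => rw [← (EuclideanSpace.basisFun ι ℝ).sum_repr v]
  simp

theorem EuclideanSpace.clm_clm_apply_eq_sum {ι : Type*} [Fintype ι] [DecidableEq ι]
    (B : EuclideanSpace ℝ ι →L[ℝ] EuclideanSpace ℝ ι →L[ℝ] ℝ) (v w : EuclideanSpace ℝ ι) :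
    B v w = ∑ p, ∑ p', v p * w p' * B (EuclideanSpace.single p 1) (EuclideanSpace.single p' 1) := by
  rw [EuclideanSpace.clm_apply_eq_sum (B v)]
  simp_rw [← B.flip_apply, EuclideanSpace.clm_apply_eq_sum (B.flip _) v, mul_sum]
  rw [sum_comm]
  exact sum_congr rfl fun _ _ => sum_congr rfl fun _ _ => by rw [B.flip_apply]; ring

theorem sum_rotField_mul_rotField {q : 𝕄 N}
    (hq : ∀ a b : Fin N, ∑ i, q (a, i) * q (b, i) = if a = b then 1 else 0) (p p' : Fin N × Fin N) :
    ∑ i, ∑ j, rotField i j q p * rotField i j q p'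
      = (if p = p' then 2 else 0) - 2 * (q (p.1, p'.2) * q (p'.1, p.2)) := by
  obtain ⟨a, k⟩ := p
  obtain ⟨b, l⟩ := p'
  simp only [rotField_apply_apply, mul_sub, mul_ite, sub_mul, ite_mul, zero_mul, mul_zero,
    sum_sub_distrib, sum_ite_eq, mem_univ, ↓reduceIte, sum_ite_irrel, hq, sum_const_zero]
  split_ifs <;> simp_all <;> ring

theorem sum_clm_rotField_rotField (ℓ : 𝕄 N →L[ℝ] ℝ) (v : 𝕄 N) :
    ∑ i, ∑ j, ℓ (rotField i j (rotField i j v))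
      = -(2 * ((N : ℝ) - 1)) * ∑ a, ∑ j, v (a, j) * ℓ (EuclideanSpace.single (a, j) 1) := by
  simp_rw [← map_sum, sum_rotField_rotField, map_smul, EuclideanSpace.clm_apply_eq_sum ℓ v,
    Fintype.sum_prod_type, smul_eq_mul]

theorem sum_rotField_bilin (B : 𝕄 N →L[ℝ] 𝕄 N →L[ℝ] ℝ) {q : 𝕄 N}
    (hq : ∀ a b : Fin N, ∑ i, q (a, i) * q (b, i) = if a = b then 1 else 0) :
    ∑ i, ∑ j, B (rotField i j q) (rotField i j q)
      = 2 * ∑ a, ∑ j, B (EuclideanSpace.single (a, j) 1) (EuclideanSpace.single (a, j) 1)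
        - 2 * ∑ a, ∑ b, ∑ i, ∑ j, q (b, j) * q (a, i)
            * B (EuclideanSpace.single (a, j) 1) (EuclideanSpace.single (b, i) 1) := by
  calc ∑ i, ∑ j, B (rotField i j q) (rotField i j q)
      = ∑ p, ∑ p', (∑ i, ∑ j, rotField i j q p * rotField i j q p')
          * B (EuclideanSpace.single p 1) (EuclideanSpace.single p' 1) := by
        simp_rw [EuclideanSpace.clm_clm_apply_eq_sum B (rotField _ _ q), sum_mul]
        rw [← Fintype.sum_prod_type', sum_comm]
        refine sum_congr rfl fun p _ => ?_
        rw [sum_comm]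
        exact sum_congr rfl fun _ _ => Fintype.sum_prod_type _
    _ = _ := by
        simp only [sum_rotField_mul_rotField hq, sub_mul, ite_mul, zero_mul, sum_sub_distrib, sum_ite_eq,
          mem_univ, ↓reduceIte, Fintype.sum_prod_type, mul_sum, sub_right_inj]
        refine sum_congr rfl fun a _ => ?_
        rw [sum_comm]
        refine sum_congr rfl fun b _ => ?_
        rw [sum_comm]
        exact sum_congr rfl fun l _ => sum_congr rfl fun k _ => by ring

theorem stmt_14_general {N : ℕ}
    (f : EuclideanSpace ℝ (Fin N × Fin N) → ℝ) (hf : ContDiff ℝ 2 f)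
    (q : EuclideanSpace ℝ (Fin N × Fin N))
    (hq : ∀ i j : Fin N, ∑ a : Fin N, q (a, i) * q (a, j) = if i = j then 1 else 0) :
    ∑ p ∈ Finset.univ.filter (fun p : Fin N × Fin N => p.1 < p.2),
        Xop p.1 p.2 (Xop p.1 p.2 f) q
      = -((N : ℝ) - 1) * (∑ a : Fin N, ∑ j : Fin N,
            q (a, j) * fderiv ℝ f q (EuclideanSpace.single (a, j) 1))
        + (∑ a : Fin N, ∑ j : Fin N,
            fderiv ℝ (fun r => fderiv ℝ f r (EuclideanSpace.single (a, j) 1)) q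
              (EuclideanSpace.single (a, j) 1))
        - (∑ a : Fin N, ∑ b : Fin N, ∑ i : Fin N, ∑ j : Fin N,
            q (b, j) * q (a, i) *
              fderiv ℝ (fun r => fderiv ℝ f r (EuclideanSpace.single (b, i) 1)) q
                (EuclideanSpace.single (a, j) 1)) := by
  have hf2 : DifferentiableAt ℝ (fderiv ℝ f) q :=
    (hf.fderiv_right (m := 1) (by norm_num)).differentiable one_ne_zero q
  have hrows : ∀ a b : Fin N, ∑ i, q (a, i) * q (b, i) = if a = b then 1 else 0 :=
    Matrix.orthonormal_rows_of_orthonormal_cols (M := Matrix.of fun a i => q (a, i)) hq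
  have hhalf := sum_filter_lt_add_sum_filter_lt (g := fun i j => Xop i j (Xop i j f) q)
    (fun i j => by simp [Xop_Xop hf2, rotField_swap i j])
    (fun i => by simp [Xop_Xop hf2, rotField_self])
  rw [← mul_right_inj' (two_ne_zero' ℝ), two_mul, hhalf]
  simp only [Xop_Xop hf2, sum_add_distrib, sum_rotField_bilin _ hrows, sum_clm_rotField_rotField,
    fderiv_fderiv_apply_const hf2]
  ring

/-- At q ∈ SO(N), ∑_{i<j} X_{ij}(X_{ij} f)(q) = -(N-1) ∑ q_{aj} ∂f/∂q_{aj}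
+ ∑ ∂²f/∂q_{aj}² - ∑ q_{bj} q_{ai} ∂²f/∂q_{bi}∂q_{aj}. -/
theorem stmt_14 {N : ℕ}
    (f : EuclideanSpace ℝ (Fin N × Fin N) → ℝ) (hf : ContDiff ℝ 2 f)
    (q : EuclideanSpace ℝ (Fin N × Fin N))
    (hq : ∀ i j : Fin N, ∑ a : Fin N, q (a, i) * q (a, j) = if i = j then 1 else 0)
    (hqdet : (Matrix.of fun a i : Fin N => q (a, i)).det = 1) :
    ∑ p ∈ Finset.univ.filter (fun p : Fin N × Fin N => p.1 < p.2),
        Xop p.1 p.2 (Xop p.1 p.2 f) q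
      = -((N : ℝ) - 1) * (∑ a : Fin N, ∑ j : Fin N,
            q (a, j) * fderiv ℝ f q (EuclideanSpace.single (a, j) 1))
        + (∑ a : Fin N, ∑ j : Fin N,
            fderiv ℝ (fun r => fderiv ℝ f r (EuclideanSpace.single (a, j) 1)) q
              (EuclideanSpace.single (a, j) 1))
        - (∑ a : Fin N, ∑ b : Fin N, ∑ i : Fin N, ∑ j : Fin N,
            q (b, j) * q (a, i) *
              fderiv ℝ (fun r => fderiv ℝ f r (EuclideanSpace.single (b, i) 1)) q
                (EuclideanSpace.single (a, j) 1)) :=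
  stmt_14_general f hf q hq
end

section
/- Let g be an N×N real orthogonal matrix and A an arbitrary N×N real matrix. Then the orthogonal projection P_g(X) = (1/2)X - (1/2) g X^T g satisfies Tr over the full matrix space of the map X ↦ P_g(X A g + g A X), with respect to orthonormal coordinates for ⟨A,B⟩ = (1/2)Tr(A^T B), equal to (N-1) Tr(A g): that is, Σ_{i<j} ⟨g(e_ie_j^T - e_je_i^T), g(e_ie_j^T - e_je_i^T) A g + g A g(e_ie_j^T - e_je_i^T)⟩ = (N-1) Tr(A g). -/
/-!
Write `E = e_ie_jᵀ - e_je_iᵀ` and `B = A g`. Since `gᵀ g = 1`, the summand for `(i, j)` is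
`½ Tr((EᵀE + EEᵀ) B)` (cycling the trace in the second term), and for `i ≠ j` both `EᵀE` and `EEᵀ`
equal `e_ie_iᵀ + e_je_jᵀ`, so the summand is `B_ii + B_jj`. Each diagonal index occurs in `N - 1`
of the pairs `i < j`.
-/

open Matrix

theorem Finset.sum_filter_lt_add {ι R : Type*} [Fintype ι] [LinearOrder ι] [Ring R]
    (f : ι → R) :
    ∑ p : ι × ι with p.1 < p.2, (f p.1 + f p.2) = ((Fintype.card ι : R) - 1) * ∑ i, f i := by
  have swap : ∑ p : ι × ι with p.1 < p.2, f p.2 = ∑ p : ι × ι with p.2 < p.1, f p.1 :=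
    Finset.sum_equiv (Equiv.prodComm ι ι) (by simp) (by simp)
  have lt_add_gt : ∑ p : ι × ι with p.1 < p.2, f p.1 + ∑ p : ι × ι with p.2 < p.1, f p.1
      = ∑ p : ι × ι with p.1 ≠ p.2, f p.1 := by
    simp only [Finset.sum_filter, ← Finset.sum_add_distrib]
    refine Finset.sum_congr rfl fun p _ => ?_
    rcases lt_trichotomy p.1 p.2 with h | h | h
    · simp [h, h.ne, h.not_gt]
    · simp [h]
    · simp [h, h.ne', h.not_gt]
  have off_row (i j : ι) : (if i ≠ j then f i else 0) = f i - if i = j then f i else 0 := by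
    split_ifs <;> simp_all
  rw [Finset.sum_add_distrib, swap, lt_add_gt, Finset.sum_filter, Fintype.sum_prod_type]
  simp [off_row, Finset.sum_sub_distrib, sub_mul, Finset.mul_sum]

namespace Matrix

variable {n R : Type*} [Fintype n] [DecidableEq n] [CommRing R]

theorem trace_transpose_mul_add_of_orthogonal {g : Matrix n n R} (hg : gᵀ * g = 1)
    (X A : Matrix n n R) :
    trace ((g * X)ᵀ * (g * X * A * g + g * A * (g * X)))
      = trace ((Xᵀ * X + X * Xᵀ) * (A * g)) := by
  have hleft : (g * X)ᵀ * (g * X * A * g) = Xᵀ * X * (A * g) := by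
    simp only [transpose_mul, Matrix.mul_assoc, ← Matrix.mul_assoc gᵀ g, hg, Matrix.one_mul]
  have hright : (g * X)ᵀ * (g * A * (g * X)) = Xᵀ * (A * g) * X := by
    simp only [transpose_mul, Matrix.mul_assoc, ← Matrix.mul_assoc gᵀ g, hg, Matrix.one_mul]
  rw [Matrix.mul_add, trace_add, hleft, hright, Matrix.add_mul, trace_add, Matrix.mul_assoc X,
    trace_mul_comm X]

theorem single_sub_single_mul_transpose {i j : n} (hij : i ≠ j) :
    (single i j (1 : R) - single j i 1) * (single i j 1 - single j i 1)ᵀ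
      = single i i 1 + single j j 1 := by
  simp [sub_mul, mul_sub, single_mul_single_of_ne _ i j i hij.symm,
    single_mul_single_of_ne _ j i j hij]

theorem transpose_mul_single_sub_single {i j : n} (hij : i ≠ j) :
    (single i j (1 : R) - single j i 1)ᵀ * (single i j 1 - single j i 1)
      = single i i 1 + single j j 1 := by
  have hT : (single i j (1 : R) - single j i 1)ᵀ = single j i 1 - single i j 1 := by
    simp [transpose_sub]
  rw [← transpose_transpose (single i j (1 : R) - single j i 1), transpose_transpose, hT,
    single_sub_single_mul_transpose hij.symm, add_comm]

theorem trace_transpose_mul_add_single_sub_single_of_orthogonal {g : Matrix n n R}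
    (hg : gᵀ * g = 1) (A : Matrix n n R) {i j : n} (hij : i ≠ j) :
    trace ((g * (single i j 1 - single j i 1))ᵀ
        * (g * (single i j 1 - single j i 1) * A * g + g * A * (g * (single i j 1 - single j i 1))))
      = 2 * ((A * g) i i + (A * g) j j) := by
  rw [trace_transpose_mul_add_of_orthogonal hg, transpose_mul_single_sub_single hij,
    single_sub_single_mul_transpose hij]
  simp only [add_mul, trace_add, trace_single_mul, one_smul]
  ring

end Matrix

/-- For g ∈ O(N) and A ∈ M_N(ℝ),
∑_{i<j} ⟨g(e_ie_jᵀ - e_je_iᵀ), g(e_ie_jᵀ - e_je_iᵀ) A g + g A g(e_ie_jᵀ - e_je_iᵀ)⟩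
= (N-1) Tr(A g). -/
theorem stmt_16 {N : ℕ} (g : Matrix (Fin N) (Fin N) ℝ) (hg : gᵀ * g = 1)
    (A : Matrix (Fin N) (Fin N) ℝ) :
    ∑ p ∈ Finset.univ.filter (fun p : Fin N × Fin N => p.1 < p.2),
        (1/2 : ℝ) * Matrix.trace
          ((g * (Matrix.single p.1 p.2 (1:ℝ) - Matrix.single p.2 p.1 1))ᵀ
            * ((g * (Matrix.single p.1 p.2 (1:ℝ) - Matrix.single p.2 p.1 1)) * A * g
              + g * A * (g * (Matrix.single p.1 p.2 (1:ℝ) - Matrix.single p.2 p.1 1))))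
      = ((N : ℝ) - 1) * Matrix.trace (A * g) := by
  calc _ = ∑ p : Fin N × Fin N with p.1 < p.2, ((A * g) p.1 p.1 + (A * g) p.2 p.2) :=
        Finset.sum_congr rfl fun p hp => by
          rw [trace_transpose_mul_add_single_sub_single_of_orthogonal hg A
            (Finset.mem_filter.1 hp).2.ne]
          ring
    _ = ((N : ℝ) - 1) * trace (A * g) := by
        rw [Finset.sum_filter_lt_add (fun i => (A * g) i i), Fintype.card_fin]
        rfl
end
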